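/- arXiv:1210.6933 — 4 statements merged into one kernel-verified Lean document; each statement's English description precedes it below -/
import Mathlib

section
/- On the curve y² = x(x - a²)(x - b²) associated to a Pythagorean triple (a,b,c), the point (c², abc) equals -2·Q₁ where Q₁ = ((a+b-c)²/2, (a+b)(a+b-c)²/2), with addition given by the elliptic curve group law. -/
/-- The Weierstrass curve `y² = x(x - a²)(x - b²)` associated to a pair of integers. -/
noncomputable def pythCurve (a b : ℤ) : WeierstrassCurve.Affine ℚ :=
  { a₁ := 0
    a₂ := -((a : ℚ) ^ 2 + (b : ℚ) ^ 2)
    a₃ := 0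
    a₄ := (a : ℚ) ^ 2 * (b : ℚ) ^ 2
    a₆ := 0 }

/-- On the curve `y² = x(x - a²)(x - b²)` associated to a Pythagorean triple `(a,b,c)`,
the point `(c², abc)` equals `-2·Q₁` where `Q₁ = ((a+b-c)²/2, (a+b)(a+b-c)²/2)`. -/
theorem point_eq_neg_two_smul_Q1 (a b c : ℤ) (h : a ^ 2 + b ^ 2 = c ^ 2)
    (hab : a * b ≠ 0)
    (h₁ : (pythCurve a b).Nonsingular ((c : ℚ) ^ 2) ((a : ℚ) * b * c))
    (h₂ : (pythCurve a b).Nonsingular (((a : ℚ) + b - c) ^ 2 / 2)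
      (((a : ℚ) + b) * ((a : ℚ) + b - c) ^ 2 / 2)) :
    WeierstrassCurve.Affine.Point.some _ _ h₁ =
      -(2 • WeierstrassCurve.Affine.Point.some _ _ h₂) := by
  have ha : (a : ℚ) ≠ 0 := by exact_mod_cast fun h0 => hab (by simpa using mul_eq_zero_of_left (by exact_mod_cast h0) b)
  have hb : (b : ℚ) ≠ 0 := by exact_mod_cast fun h0 => hab (by simpa using mul_eq_zero_of_right a (by exact_mod_cast h0))
  have hc : (a : ℚ) ^ 2 + (b : ℚ) ^ 2 = (c : ℚ) ^ 2 := by exact_mod_cast h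
  -- a + b ≠ 0
  have hs : (a : ℚ) + b ≠ 0 := by
    intro h0
    have hq : ((c : ℚ) / a) ^ 2 = 2 := by
      rw [div_pow, div_eq_iff (pow_ne_zero 2 ha)]
      linear_combination -hc + ((b : ℚ) - a) * h0
    have hq' : ((((c : ℚ) / a) : ℚ) : ℝ) ^ 2 = 2 := by
      have := congrArg (fun q : ℚ => (q : ℝ)) hq
      push_cast at this
      simpa using this
    have h2 : Real.sqrt 2 = |((((c : ℚ) / a) : ℚ) : ℝ)| := by
      rw [← hq', Real.sqrt_sq_eq_abs]
    have : Irrational ((|((c : ℚ) / a)| : ℚ) : ℝ) := by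
      rw [show ((|((c : ℚ) / a)| : ℚ) : ℝ) = |((((c : ℚ) / a) : ℚ) : ℝ)| by push_cast; ring,
        ← h2]
      exact irrational_sqrt_two
    exact (Rat.not_irrational _) this
  -- a + b - c ≠ 0
  have ht : (a : ℚ) + b - c ≠ 0 := by
    intro h0
    have : (a : ℚ) * b = 0 := by
      linear_combination (-(1 : ℚ)/2) * hc + (((a : ℚ) + b + c)/2) * h0
    exact (mul_ne_zero ha hb) this
  have hy : ((a : ℚ) + b) * ((a : ℚ) + b - c) ^ 2 / 2 ≠
      (pythCurve a b).negY (((a : ℚ) + b - c) ^ 2 / 2)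
        (((a : ℚ) + b) * ((a : ℚ) + b - c) ^ 2 / 2) := by
    simp only [WeierstrassCurve.Affine.negY, pythCurve]
    intro h0
    have : ((a : ℚ) + b) * ((a : ℚ) + b - c) ^ 2 = 0 := by linarith
    rcases mul_eq_zero.mp this with h' | h'
    · exact hs h'
    · exact ht (pow_eq_zero_iff (by norm_num) |>.mp h')
  rw [two_smul, WeierstrassCurve.Affine.Point.add_self_of_Y_ne' hy, neg_neg]
  have hL : (pythCurve a b).slope (((a : ℚ) + b - c) ^ 2 / 2) (((a : ℚ) + b - c) ^ 2 / 2)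
      (((a : ℚ) + b) * ((a : ℚ) + b - c) ^ 2 / 2) (((a : ℚ) + b) * ((a : ℚ) + b - c) ^ 2 / 2) =
      (3 * ((((a : ℚ) + b - c) ^ 2 / 2)) ^ 2 + 2 * (pythCurve a b).a₂ * ((((a : ℚ) + b - c) ^ 2 / 2)) + (pythCurve a b).a₄ - (pythCurve a b).a₁ * (((a : ℚ) + b) * ((a : ℚ) + b - c) ^ 2 / 2)) /
        ((((a : ℚ) + b) * ((a : ℚ) + b - c) ^ 2 / 2) - (pythCurve a b).negY (((a : ℚ) + b - c) ^ 2 / 2) (((a : ℚ) + b) * ((a : ℚ) + b - c) ^ 2 / 2)) :=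
    WeierstrassCurve.Affine.slope_of_Y_ne rfl hy
  simp only [WeierstrassCurve.Affine.Point.some.injEq]
  have hd : ((a : ℚ) + b) * ((a : ℚ) + b - c) ^ 2 ≠ 0 := mul_ne_zero hs (pow_ne_zero 2 ht)
  have hL2 : (pythCurve a b).slope (((a : ℚ) + b - c) ^ 2 / 2) (((a : ℚ) + b - c) ^ 2 / 2)
      (((a : ℚ) + b) * ((a : ℚ) + b - c) ^ 2 / 2) (((a : ℚ) + b) * ((a : ℚ) + b - c) ^ 2 / 2) =
      (a : ℚ) + b - c := by
    rw [hL]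
    simp only [pythCurve, WeierstrassCurve.Affine.negY]
    rw [div_eq_iff (by intro h0; apply hd; linarith)]
    linear_combination (-((((a : ℚ) ^ 2 + b ^ 2 - c ^ 2) / 4) + (a : ℚ) * b
      + ((a : ℚ) + b - c) ^ 2)) * hc
  constructor
  · rw [hL2]
    simp only [pythCurve, WeierstrassCurve.Affine.addX]
    linear_combination -hc
  · rw [WeierstrassCurve.Affine.negAddY, hL2]
    simp only [pythCurve, WeierstrassCurve.Affine.addX]
    linear_combination ((c : ℚ) / 2 - a - b) * hc
end

section
/- For rational p, q with q ≠ 0 and P/Q = 2pq/(p² + 5q²) in lowest terms with k = gcd(2pq, p² + 5q²), set a = P² - Q², b = 2PQ, c = P² + Q². Then the point (a(a-c)/2, ab(p⁴ - 25q⁴)/(2k²)) lies on the curve y² = x(x - a²)(x - b²). -/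
/-- For integers `p, q` with `q ≠ 0`, let `k = gcd(2pq, p² + 5q²)`,
`P = 2pq/k`, `Q = (p² + 5q²)/k`, and `a = P² - Q²`, `b = 2PQ`, `c = P² + Q²`.
Then the point `(a(a-c)/2, ab(p⁴ - 25q⁴)/(2k²))` lies on the curve
`y² = x(x - a²)(x - b²)`. -/
theorem point_Q2_on_curve (p q : ℤ) (hq : q ≠ 0) (hpq : p ^ 2 + 5 * q ^ 2 ≠ 0) :
    let k : ℤ := Int.gcd (2 * p * q) (p ^ 2 + 5 * q ^ 2)
    let P : ℚ := (2 * p * q : ℤ) / (k : ℚ)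
    let Q : ℚ := ((p ^ 2 + 5 * q ^ 2 : ℤ) : ℚ) / (k : ℚ)
    let a : ℚ := P ^ 2 - Q ^ 2
    let b : ℚ := 2 * P * Q
    let c : ℚ := P ^ 2 + Q ^ 2
    let x : ℚ := a * (a - c) / 2
    let y : ℚ := a * b * (((p : ℚ) ^ 4 - 25 * (q : ℚ) ^ 4) / (2 * (k : ℚ) ^ 2))
    y ^ 2 = x * (x - a ^ 2) * (x - b ^ 2) := by
  intro k P Q a b c x y
  have hk : (k : ℚ) ≠ 0 := by
    have : k ≠ 0 := by
      intro h
      simp only [k, Int.natCast_eq_zero, Int.gcd_eq_zero_iff] at h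
      exact hpq h.2
    exact_mod_cast this
  simp only [y, x, a, b, c, P, Q]
  push_cast
  field_simp
  ring
end

section
/- Over ℚ(t), with u = 2t/(5 + t²), the point P₃ = (1 - u², (t² - 5)·u·(u² - 1)/(5 + t²)) lies on the elliptic curve y² = x(x - (u²-1)²)(x - 4u²). -/
/-- Over `ℚ(t)`, with `u = 2t/(5 + t²)`, the point
`P₃ = (1 - u², (t² - 5)·u·(u² - 1)/(5 + t²))` lies on the elliptic curve
`y² = x(x - (u²-1)²)(x - 4u²)`. -/
theorem point_P3_on_E3 :
    let t : RatFunc ℚ := RatFunc.X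
    let u : RatFunc ℚ := 2 * t / (5 + t ^ 2)
    ((t ^ 2 - 5) * u * (u ^ 2 - 1) / (5 + t ^ 2)) ^ 2 =
      (1 - u ^ 2) * ((1 - u ^ 2) - (u ^ 2 - 1) ^ 2) * ((1 - u ^ 2) - 4 * u ^ 2) := by
  intro t u
  have h : (5 + t ^ 2) ≠ 0 := by
    have h5 : (5 : RatFunc ℚ) + t ^ 2
        = algebraMap (Polynomial ℚ) (RatFunc ℚ) (5 + Polynomial.X ^ 2) := by
      simp [t, RatFunc.algebraMap_X, map_ofNat]
    rw [h5, ne_eq, FaithfulSMul.algebraMap_eq_zero_iff]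
    intro hc
    have := congrArg (Polynomial.eval 0) hc
    simp at this
  have hu : u * (5 + t ^ 2) = 2 * t := div_mul_cancel₀ _ h
  apply mul_right_cancel₀ (pow_ne_zero 2 h)
  have hL : ((t ^ 2 - 5) * u * (u ^ 2 - 1) / (5 + t ^ 2)) ^ 2 * (5 + t ^ 2) ^ 2
      = ((t ^ 2 - 5) * u * (u ^ 2 - 1)) ^ 2 := by
    rw [div_pow, div_mul_cancel₀ _ (pow_ne_zero 2 h)]
  rw [hL]
  linear_combination (5 * (5 + t ^ 2) * u ^ 7 + 10 * t * u ^ 6 - 10 * (5 + t ^ 2) * u ^ 5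
    - 20 * t * u ^ 4 + 5 * (5 + t ^ 2) * u ^ 3 + 10 * t * u ^ 2) * hu
end

section
/- No root of the polynomial x⁴ - 8x³ + 238x² - 2312x + 83521 has the form 17ζ for a root of unity ζ. -/
open Polynomial

/-- No root of `x⁴ - 8x³ + 238x² - 2312x + 83521` has the form `17ζ` for a root of
unity `ζ`. -/
theorem no_root_is_17_times_root_of_unity (z ζ : ℂ)
    (hζ : ∃ n : ℕ, 0 < n ∧ ζ ^ n = 1)
    (hz : z ^ 4 - 8 * z ^ 3 + 238 * z ^ 2 - 2312 * z + 83521 = 0) :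
    z ≠ 17 * ζ := by
  intro heq
  subst heq
  obtain ⟨n, hn, hζn⟩ := hζ
  have hζ0 : ζ ≠ 0 := by
    intro h
    rw [h, zero_pow hn.ne'] at hζn
    exact zero_ne_one hζn
  set w : ℂ := ζ + ζ⁻¹ with hw
  -- the quartic in ζ
  have h4 : 17 * ζ^4 - 8*ζ^3 + 14*ζ^2 - 8*ζ + 17 = 0 := by
    linear_combination (1/4913 : ℂ) * hz
  have hweq : 17 * w ^ 2 - 8 * w - 20 = 0 := by
    have hzz : ζ * ζ⁻¹ = 1 := mul_inv_cancel₀ hζ0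
    have hz2 : ζ^2 * (17 * w ^ 2 - 8 * w - 20) = 0 := by
      rw [hw]
      linear_combination h4 + (34*ζ^2 + 17*(ζ*ζ⁻¹ + 1) - 8*ζ) * hzz
    rcases mul_eq_zero.mp hz2 with h | h
    · exact absurd (pow_eq_zero_iff (two_ne_zero)|>.mp h) hζ0
    · exact h
  -- ζ is an algebraic integer
  have hζint : IsIntegral ℤ ζ := by
    refine ⟨X^n - C 1, monic_X_pow_sub_C 1 hn.ne', ?_⟩
    simp [hζn]
  have hinv : ζ⁻¹ = ζ^(n-1) := by
    apply inv_eq_of_mul_eq_one_right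
    rw [← pow_succ', Nat.sub_add_cancel hn]
    exact hζn
  have hwint : IsIntegral ℤ w := by
    rw [hw, hinv]
    exact hζint.add (hζint.pow _)
  -- minpoly over ℤ divides 17X² - 8X - 20
  set p : ℤ[X] := C 17 * X^2 - C 8 * X - C 20 with hp
  have haev : (aeval w) p = 0 := by
    simp only [hp, map_sub, map_mul, map_pow, aeval_C, aeval_X, map_ofNat, algebraMap_int_eq,
      eq_intCast]
    linear_combination hweq
  have hdvd : minpoly ℤ w ∣ p := minpoly.isIntegrallyClosed_dvd hwint haev
  obtain ⟨r, hr⟩ := hdvd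
  set q := minpoly ℤ w with hq
  have hqmonic : q.Monic := minpoly.monic hwint
  have hq0 : q ≠ 0 := hqmonic.ne_zero
  have hp1 : p.coeff 1 = -8 := by simp [hp, coeff_X]
  have hp2 : p.coeff 2 = 17 := by simp [hp, coeff_X]
  have hp0 : p ≠ 0 := by
    intro h
    rw [h] at hp2
    simp at hp2
  have hr0 : r ≠ 0 := by rintro rfl; simp [hr] at hp0
  have hpdeg : p.natDegree = 2 := by
    rw [hp]; compute_degree!
  have hdegs : q.natDegree + r.natDegree = 2 := by
    rw [← natDegree_mul hq0 hr0, ← hr, hpdeg]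
  have hqpos : 0 < q.natDegree := minpoly.natDegree_pos hwint
  have hqle : q.natDegree ≤ 2 := by omega
  interval_cases h : q.natDegree
  · -- degree 1 : w is an integer
    have hq1 : q = X + C (q.coeff 0) := by
      have := hqmonic.eq_X_add_C h
      simpa using this
    have hroot : (aeval w) q = 0 := minpoly.aeval ℤ w
    rw [hq1] at hroot
    simp at hroot
    -- w = -(q.coeff 0 : ℂ)
    set m : ℤ := q.coeff 0 with hm
    have hwm : w = -(m:ℂ) := by linear_combination hroot
    rw [hwm] at hweq
    have hint : 17 * m^2 + 8 * m - 20 = 0 := by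
      have : ((17 * m^2 + 8 * m - 20 : ℤ) : ℂ) = 0 := by push_cast; linear_combination hweq
      exact_mod_cast this
    have hsq : (17*m + 4)^2 = 356 := by ring_nf; linarith
    have h1 : m ≤ 1 := by nlinarith
    have h2 : -2 ≤ m := by nlinarith
    interval_cases m <;> norm_num at hsq
  · -- degree 2 : r is a constant, compare coefficients
    have hrdeg : r.natDegree = 0 := by omega
    have hrc : r = C (r.coeff 0) := eq_C_of_natDegree_eq_zero hrdeg
    set a : ℤ := r.coeff 0 with ha
    have hc2 : p.coeff 2 = (q * r).coeff 2 := by rw [hr]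
    have hc1 : p.coeff 1 = (q * r).coeff 1 := by rw [hr]
    rw [hrc] at hc2 hc1
    simp [coeff_mul_C] at hc2 hc1
    have hq2 : q.coeff 2 = 1 := by
      have := hqmonic.leadingCoeff
      rwa [leadingCoeff, h] at this
    rw [hp2, hq2] at hc2
    rw [hp1] at hc1
    have ha17 : a = 17 := by linarith
    rw [ha17] at hc1
    omega
end
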